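/- Let p_i, q_i ∈ [1,∞] and s_i ∈ ℝ for i ∈ {0,1,2} with 1/p_1 + 1/p_2 = 1/p_0, 1/q_1 + 1/q_2 = 1/q_0, and s_0 = s_1 + s_2. If f ∈ T^{p_1,q_1}_{s_1} and g ∈ T^{p_2,q_2}_{s_2}, then fg ∈ T^{p_0,q_0}_{s_0} and ‖fg‖_{T^{p_0,q_0}_{s_0}} ≤ C ‖f‖_{T^{p_1,q_1}_{s_1}} ‖g‖_{T^{p_2,q_2}_{s_2}}. -/

import Mathlib

open MeasureTheory Set ENNReal Filter

/-- `L^p`-type quasinorm with exponent `p ∈ [1,∞]` of an `ℝ≥0∞`-valued function. -/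
noncomputable def eN {α : Type*} [MeasurableSpace α] (p : ℝ≥0∞) (μ : Measure α)
    (g : α → ℝ≥0∞) : ℝ≥0∞ :=
  if p = ⊤ then essSup g μ else (∫⁻ a, g a ^ p.toReal ∂μ) ^ (1 / p.toReal)

/-- The cone (nontangential region) of aperture 1 with vertex `x' ∈ ℝ^{n-1}`. -/
def cone (n : ℕ) (x' : EuclideanSpace ℝ (Fin (n - 1))) :
    Set (EuclideanSpace ℝ (Fin (n - 1)) × ℝ) :=
  {p | 0 < p.2 ∧ dist x' p.1 < p.2}

/-- The measure `y_n^{-(n-1)} dy' dy_n` on the cone `Γ(x')`. -/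
noncomputable def coneMeasure (n : ℕ) (x' : EuclideanSpace ℝ (Fin (n - 1))) :
    Measure (EuclideanSpace ℝ (Fin (n - 1)) × ℝ) :=
  (volume.restrict (cone n x')).withDensity fun pt => ENNReal.ofReal (pt.2 ^ (-((n : ℝ) - 1)))

section Aux
variable {β : Type*} [MeasurableSpace β] {μ : Measure β}

lemma eN_mono (p : ℝ≥0∞) {f g : β → ℝ≥0∞} (h : f ≤ᵐ[μ] g) : eN p μ f ≤ eN p μ g := by
  unfold eN
  split_ifs
  · exact essSup_mono_ae h
  · refine ENNReal.rpow_le_rpow (lintegral_mono_ae (h.mono fun a ha => ?_)) (by positivity)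
    exact ENNReal.rpow_le_rpow ha ENNReal.toReal_nonneg

lemma eN_congr (p : ℝ≥0∞) {f g : β → ℝ≥0∞} (h : f =ᵐ[μ] g) : eN p μ f = eN p μ g :=
  le_antisymm (eN_mono p h.le) (eN_mono p h.symm.le)

lemma eN_holder_top (μ : Measure β) {p : ℝ≥0∞} (hpt : p ≠ ⊤) (hp0 : p ≠ 0)
    {f g : β → ℝ≥0∞} (hg : AEMeasurable g μ) :
    eN p μ (f * g) ≤ eN ⊤ μ f * eN p μ g := by
  have hc : 0 < p.toReal := ENNReal.toReal_pos hp0 hpt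
  simp only [eN, if_neg hpt, if_pos rfl]
  have h1 : ∫⁻ a, (f * g) a ^ p.toReal ∂μ
      ≤ (essSup f μ) ^ p.toReal * ∫⁻ a, g a ^ p.toReal ∂μ := by
    rw [← lintegral_const_mul'' _ (hg.pow_const _)]
    refine lintegral_mono_ae ((ENNReal.ae_le_essSup f).mono fun a ha => ?_)
    calc (f * g) a ^ p.toReal = f a ^ p.toReal * g a ^ p.toReal := by
          simp [ENNReal.mul_rpow_of_nonneg _ _ hc.le]
      _ ≤ (essSup f μ) ^ p.toReal * g a ^ p.toReal := by gcongr
  calc (∫⁻ a, (f * g) a ^ p.toReal ∂μ) ^ (1 / p.toReal)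
      ≤ ((essSup f μ) ^ p.toReal * ∫⁻ a, g a ^ p.toReal ∂μ) ^ (1 / p.toReal) :=
        ENNReal.rpow_le_rpow h1 (by positivity)
    _ = essSup f μ * (∫⁻ a, g a ^ p.toReal ∂μ) ^ (1 / p.toReal) := by
        rw [ENNReal.mul_rpow_of_nonneg _ _ (by positivity), ← ENNReal.rpow_mul,
          mul_one_div_cancel hc.ne', ENNReal.rpow_one]

lemma eN_holder (μ : Measure β) {p₀ p₁ p₂ : ℝ≥0∞}
    (hp₁ : 1 ≤ p₁) (hp₂ : 1 ≤ p₂) (hp : 1 / p₁ + 1 / p₂ = 1 / p₀)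
    {f g : β → ℝ≥0∞} (hf : AEMeasurable f μ) (hg : AEMeasurable g μ) :
    eN p₀ μ (f * g) ≤ eN p₁ μ f * eN p₂ μ g := by
  have h10 : p₁ ≠ 0 := (lt_of_lt_of_le zero_lt_one hp₁).ne'
  have h20 : p₂ ≠ 0 := (lt_of_lt_of_le zero_lt_one hp₂).ne'
  rcases eq_or_ne p₁ ⊤ with h1 | h1
  · rcases eq_or_ne p₂ ⊤ with h2 | h2
    · have h0 : p₀ = ⊤ := by
        have h : 1 / p₀ = 0 := by rw [← hp, h1, h2]; simp
        simpa [ENNReal.div_eq_zero_iff] using h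
      simp only [eN, if_pos h0, if_pos h1, if_pos h2]
      exact ENNReal.essSup_mul_le f g
    · have h02 : p₀ = p₂ := by
        have h : 1 / p₀ = 1 / p₂ := by rw [← hp, h1]; simp
        have h' := congrArg (·⁻¹) h
        simpa [one_div] using h'
      rw [h02, h1]
      exact eN_holder_top μ h2 h20 hg
  · rcases eq_or_ne p₂ ⊤ with h2 | h2
    · have h01 : p₀ = p₁ := by
        have h : 1 / p₀ = 1 / p₁ := by rw [← hp, h2]; simp
        have h' := congrArg (·⁻¹) h
        simpa [one_div] using h'
      rw [h01, h2, mul_comm f g, mul_comm (eN p₁ μ f)]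
      exact eN_holder_top μ h1 h10 hf
    · have hd1 : 1 / p₁ ≠ ⊤ := by simp [ENNReal.div_eq_top, h10]
      have hd2 : 1 / p₂ ≠ ⊤ := by simp [ENNReal.div_eq_top, h20]
      have h0top : p₀ ≠ ⊤ := by
        intro h
        rw [h] at hp
        simp only [ENNReal.div_top] at hp
        have : 1 / p₁ = 0 := by
          have := add_eq_zero.mp hp
          exact this.1
        simp [ENNReal.div_eq_zero_iff, h1] at this
      have h00 : p₀ ≠ 0 := by
        intro h
        rw [h, ENNReal.div_zero one_ne_zero] at hp
        exact (ENNReal.add_ne_top.mpr ⟨hd1, hd2⟩) hp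
      have hpr : 1 / p₀.toReal = 1 / p₁.toReal + 1 / p₂.toReal := by
        have h := congrArg ENNReal.toReal hp
        rw [ENNReal.toReal_add hd1 hd2] at h
        simpa [ENNReal.toReal_div] using h.symm
      have hlt : p₀ < p₁ := by
        have h : 1 / p₁ < 1 / p₀ := by
          rw [← hp]
          exact ENNReal.lt_add_right hd1 (by simp [ENNReal.div_eq_zero_iff, h2])
        simp only [one_div] at h
        exact ENNReal.inv_lt_inv.mp h
      have h0r : 0 < p₀.toReal := ENNReal.toReal_pos h00 h0top
      have hltr : p₀.toReal < p₁.toReal := (ENNReal.toReal_lt_toReal h0top h1).mpr hlt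
      simp only [eN, if_neg h0top, if_neg h1, if_neg h2]
      exact ENNReal.lintegral_Lp_mul_le_Lq_mul_Lr h0r hltr hpr μ hf hg

lemma essSup_eq_rat_sup (ν : Measure β) (w : β → ℝ≥0∞) :
    essSup w ν = ⨆ t : ℚ,
      if ν {y | ENNReal.ofReal t < w y} ≠ 0 then ENNReal.ofReal t else 0 := by
  apply le_antisymm
  · refine le_of_forall_lt fun c hc => ?_
    obtain ⟨q, _, hq1, hq2⟩ := ENNReal.lt_iff_exists_rat_btwn.mp hc
    have hne : ν {y | ENNReal.ofReal q < w y} ≠ 0 := by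
      intro h0
      have hae : ∀ᵐ y ∂ν, w y ≤ ENNReal.ofReal q := by
        rw [ae_iff]
        simpa [not_le] using h0
      exact absurd (essSup_le_of_ae_le _ hae) (not_le.mpr hq2)
    calc c < ENNReal.ofReal q := hq1
      _ = if ν {y | ENNReal.ofReal q < w y} ≠ 0 then ENNReal.ofReal q else 0 :=
          (if_pos hne).symm
      _ ≤ _ := le_iSup (fun t : ℚ =>
          if ν {y | ENNReal.ofReal t < w y} ≠ 0 then ENNReal.ofReal t else 0) q
  · refine iSup_le fun t => ?_
    split_ifs with h
    · by_contra hlt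
      push_neg at hlt
      refine h (measure_mono_null (fun y hy => ?_) ((ae_iff.mp (ENNReal.ae_le_essSup w))))
      simp only [mem_setOf_eq, not_le]
      exact lt_of_le_of_lt hlt.le hy
    · exact zero_le
end Aux


section Cone
variable (n : ℕ)

lemma measurableSet_cone (x' : EuclideanSpace ℝ (Fin (n - 1))) :
    MeasurableSet (cone n x') := by
  have h : cone n x' = {p : EuclideanSpace ℝ (Fin (n - 1)) × ℝ | 0 < p.2} ∩
      {p | dist x' p.1 < p.2} := rfl
  rw [h]
  exact (measurableSet_lt measurable_const measurable_snd).inter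
    (measurableSet_lt (measurable_const.dist measurable_fst) measurable_snd)

lemma measurableSet_coneJoint :
    MeasurableSet {z : EuclideanSpace ℝ (Fin (n - 1)) ×
        (EuclideanSpace ℝ (Fin (n - 1)) × ℝ) | z.2 ∈ cone n z.1} := by
  have h : {z : EuclideanSpace ℝ (Fin (n - 1)) ×
        (EuclideanSpace ℝ (Fin (n - 1)) × ℝ) | z.2 ∈ cone n z.1} =
      {z | 0 < z.2.2} ∩ {z | dist z.1 z.2.1 < z.2.2} := rfl
  rw [h]
  exact (measurableSet_lt measurable_const (measurable_snd.comp measurable_snd)).inter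
    (measurableSet_lt (measurable_fst.dist (measurable_fst.comp measurable_snd))
      (measurable_snd.comp measurable_snd))

lemma measurable_coneDensity :
    Measurable fun pt : EuclideanSpace ℝ (Fin (n - 1)) × ℝ =>
      ENNReal.ofReal (pt.2 ^ (-((n : ℝ) - 1))) :=
  ENNReal.measurable_ofReal.comp (measurable_snd.pow_const _)

lemma coneMeasure_ae (x' : EuclideanSpace ℝ (Fin (n - 1))) :
    ae (coneMeasure n x') = ae (volume.restrict (cone n x')) := by
  have hd : ∀ᵐ pt ∂(volume.restrict (cone n x')),
      ENNReal.ofReal (pt.2 ^ (-((n : ℝ) - 1))) ≠ 0 := by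
    filter_upwards [ae_restrict_mem (measurableSet_cone n x')] with pt hpt
    simpa [ENNReal.ofReal_eq_zero, not_le] using Real.rpow_pos_of_pos hpt.1 _
  refine Filter.ext fun s => ?_
  change (∀ᵐ pt ∂(coneMeasure n x'), pt ∈ s) ↔ ∀ᵐ pt ∂(volume.restrict (cone n x')), pt ∈ s
  rw [coneMeasure, ae_withDensity_iff (measurable_coneDensity n)]
  constructor
  · intro h; filter_upwards [h, hd] with pt h1 h2; exact h1 h2
  · intro h; filter_upwards [h] with pt h1; exact fun _ => h1
end Cone

section Cone2
variable (n : ℕ)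


lemma lintegral_coneMeasure (x' : EuclideanSpace ℝ (Fin (n - 1)))
    {w : EuclideanSpace ℝ (Fin (n - 1)) × ℝ → ℝ≥0∞} (hw : Measurable w) :
    ∫⁻ pt, w pt ∂(coneMeasure n x') =
      ∫⁻ pt, (cone n x').indicator
        (fun pt => ENNReal.ofReal (pt.2 ^ (-((n : ℝ) - 1))) * w pt) pt := by
  rw [coneMeasure, lintegral_withDensity_eq_lintegral_mul _ (measurable_coneDensity n) hw,
    ← lintegral_indicator (measurableSet_cone n x')]
  rfl

lemma measurable_eN_cone (q : ℝ≥0∞)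
    {w : EuclideanSpace ℝ (Fin (n - 1)) × ℝ → ℝ≥0∞} (hw : Measurable w) :
    Measurable fun x' => eN q (coneMeasure n x') w := by
  rcases eq_or_ne q ⊤ with hq | hq
  · subst hq
    simp only [eN, if_pos rfl]
    have h1 : ∀ x', essSup w (coneMeasure n x') = ⨆ t : ℚ,
        if volume ({y | ENNReal.ofReal t < w y} ∩ cone n x') ≠ 0
          then ENNReal.ofReal t else 0 := by
      intro x'
      have h2 : essSup w (coneMeasure n x') = essSup w (volume.restrict (cone n x')) := by
        show limsup w (ae (coneMeasure n x')) = limsup w (ae (volume.restrict (cone n x')))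
        rw [coneMeasure_ae]
      rw [h2, essSup_eq_rat_sup]
      congr 1
      funext t
      rw [Measure.restrict_apply (measurableSet_lt measurable_const hw)]
    simp_rw [h1]
    refine Measurable.iSup fun t => ?_
    have hS : MeasurableSet {z : EuclideanSpace ℝ (Fin (n - 1)) ×
        (EuclideanSpace ℝ (Fin (n - 1)) × ℝ) |
        z.2 ∈ {y | ENNReal.ofReal t < w y} ∩ cone n z.1} := by
      have h : {z : EuclideanSpace ℝ (Fin (n - 1)) ×
          (EuclideanSpace ℝ (Fin (n - 1)) × ℝ) |
          z.2 ∈ {y | ENNReal.ofReal t < w y} ∩ cone n z.1} =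
          {z | ENNReal.ofReal t < w z.2} ∩ {z | z.2 ∈ cone n z.1} := rfl
      rw [h]
      exact (measurableSet_lt measurable_const (hw.comp measurable_snd)).inter
        (measurableSet_coneJoint n)
    have hm : Measurable fun x' => volume ({y | ENNReal.ofReal t < w y} ∩ cone n x') := by
      have h : (fun x' => volume ({y | ENNReal.ofReal t < w y} ∩ cone n x')) =
          fun x' => volume (Prod.mk x' ⁻¹'
            {z : EuclideanSpace ℝ (Fin (n - 1)) × (EuclideanSpace ℝ (Fin (n - 1)) × ℝ) |
              z.2 ∈ {y | ENNReal.ofReal t < w y} ∩ cone n z.1}) := rfl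
      rw [h]
      exact measurable_measure_prodMk_left hS
    exact Measurable.ite (hm (measurableSet_singleton 0).compl) measurable_const
      measurable_const
  · simp only [eN, if_neg hq]
    have hw2 : Measurable fun pt : EuclideanSpace ℝ (Fin (n - 1)) × ℝ =>
      w pt ^ q.toReal := hw.pow_const _
    have h1 : ∀ x', ∫⁻ pt, w pt ^ q.toReal ∂(coneMeasure n x') =
        ∫⁻ pt, ({z : EuclideanSpace ℝ (Fin (n - 1)) ×
            (EuclideanSpace ℝ (Fin (n - 1)) × ℝ) | z.2 ∈ cone n z.1}.indicator
          (fun z => ENNReal.ofReal (z.2.2 ^ (-((n : ℝ) - 1))) * w z.2 ^ q.toReal)) (x', pt) := by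
      intro x'
      rw [lintegral_coneMeasure n x' hw2]
      congr 1
    simp_rw [h1]
    have hF : Measurable fun z : EuclideanSpace ℝ (Fin (n - 1)) ×
        (EuclideanSpace ℝ (Fin (n - 1)) × ℝ) =>
        ({z : EuclideanSpace ℝ (Fin (n - 1)) ×
            (EuclideanSpace ℝ (Fin (n - 1)) × ℝ) | z.2 ∈ cone n z.1}.indicator
          (fun z => ENNReal.ofReal (z.2.2 ^ (-((n : ℝ) - 1))) * w z.2 ^ q.toReal)) z :=
      Measurable.indicator
        (((measurable_coneDensity n).comp measurable_snd).mul (hw2.comp measurable_snd))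
        (measurableSet_coneJoint n)
    exact (Measurable.lintegral_prod_right' hF).pow_const _
end Cone2

/-- The weighted tent space norm. -/
noncomputable def wTentNorm (n : ℕ) (p q : ℝ≥0∞) (s : ℝ)
    (F : EuclideanSpace ℝ (Fin (n - 1)) × ℝ → ℝ) : ℝ≥0∞ :=
  eN p volume fun x' =>
    eN q (coneMeasure n x') fun pt => ENNReal.ofReal (pt.2 ^ ((1 - (n : ℝ)) * s) * |F pt|)

lemma coneMeasure_ae_of (n : ℕ) (x' : EuclideanSpace ℝ (Fin (n - 1)))
    {P : EuclideanSpace ℝ (Fin (n - 1)) × ℝ → Prop}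
    (h : ∀ᵐ pt ∂(volume.restrict (cone n x')), P pt) :
    ∀ᵐ pt ∂(coneMeasure n x'), P pt :=
  (coneMeasure_ae n x').symm ▸ h

/-- **Hölder's inequality in weighted tent spaces.** If `1/p₁+1/p₂ = 1/p₀`,
`1/q₁+1/q₂ = 1/q₀` and `s₀ = s₁+s₂`, then for `f ∈ T^{p₁,q₁}_{s₁}` and
`g ∈ T^{p₂,q₂}_{s₂}` the product lies in `T^{p₀,q₀}_{s₀}` with
`‖fg‖ ≤ C ‖f‖ ‖g‖`. -/
theorem holder_weighted_tent (n : ℕ) (hn : 2 ≤ n)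
    (p₀ p₁ p₂ q₀ q₁ q₂ : ℝ≥0∞) (s₀ s₁ s₂ : ℝ)
    (hp₀ : 1 ≤ p₀) (hp₁ : 1 ≤ p₁) (hp₂ : 1 ≤ p₂)
    (hq₀ : 1 ≤ q₀) (hq₁ : 1 ≤ q₁) (hq₂ : 1 ≤ q₂)
    (hp : 1 / p₁ + 1 / p₂ = 1 / p₀) (hq : 1 / q₁ + 1 / q₂ = 1 / q₀)
    (hs : s₀ = s₁ + s₂) :
    ∃ C : ℝ, 0 < C ∧
      ∀ (f g : EuclideanSpace ℝ (Fin (n - 1)) × ℝ → ℝ), Measurable f → Measurable g →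
        wTentNorm n p₁ q₁ s₁ f < ⊤ → wTentNorm n p₂ q₂ s₂ g < ⊤ →
        wTentNorm n p₀ q₀ s₀ (f * g) < ⊤ ∧
          wTentNorm n p₀ q₀ s₀ (f * g) ≤
            ENNReal.ofReal C * wTentNorm n p₁ q₁ s₁ f * wTentNorm n p₂ q₂ s₂ g := by
  refine ⟨1, one_pos, fun f g hf hg hFf hFg => ?_⟩
  have hw₁ : Measurable fun pt : EuclideanSpace ℝ (Fin (n - 1)) × ℝ =>
      ENNReal.ofReal (pt.2 ^ ((1 - (n : ℝ)) * s₁) * |f pt|) :=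
    ENNReal.measurable_ofReal.comp ((measurable_snd.pow_const _).mul hf.abs)
  have hw₂ : Measurable fun pt : EuclideanSpace ℝ (Fin (n - 1)) × ℝ =>
      ENNReal.ofReal (pt.2 ^ ((1 - (n : ℝ)) * s₂) * |g pt|) :=
    ENNReal.measurable_ofReal.comp ((measurable_snd.pow_const _).mul hg.abs)
  have key : ∀ x', eN q₀ (coneMeasure n x')
        (fun pt => ENNReal.ofReal (pt.2 ^ ((1 - (n : ℝ)) * s₀) * |(f * g) pt|)) ≤
      eN q₁ (coneMeasure n x')
          (fun pt => ENNReal.ofReal (pt.2 ^ ((1 - (n : ℝ)) * s₁) * |f pt|)) *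
      eN q₂ (coneMeasure n x')
          (fun pt => ENNReal.ofReal (pt.2 ^ ((1 - (n : ℝ)) * s₂) * |g pt|)) := by
    intro x'
    have hae : (fun pt => ENNReal.ofReal (pt.2 ^ ((1 - (n : ℝ)) * s₀) * |(f * g) pt|))
        =ᵐ[coneMeasure n x']
        ((fun pt => ENNReal.ofReal (pt.2 ^ ((1 - (n : ℝ)) * s₁) * |f pt|)) *
          fun pt => ENNReal.ofReal (pt.2 ^ ((1 - (n : ℝ)) * s₂) * |g pt|)) := by
      refine coneMeasure_ae_of n x' ?_
      filter_upwards [ae_restrict_mem (measurableSet_cone n x')] with pt hpt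
      have h2 : (0 : ℝ) < pt.2 := hpt.1
      have hr : pt.2 ^ ((1 - (n : ℝ)) * s₀)
          = pt.2 ^ ((1 - (n : ℝ)) * s₁) * pt.2 ^ ((1 - (n : ℝ)) * s₂) := by
        rw [hs, mul_add, Real.rpow_add h2]
      show ENNReal.ofReal (pt.2 ^ ((1 - (n : ℝ)) * s₀) * |(f * g) pt|) = _
      rw [Pi.mul_apply, Pi.mul_apply, abs_mul, hr,
        show pt.2 ^ ((1 - (n : ℝ)) * s₁) * pt.2 ^ ((1 - (n : ℝ)) * s₂) * (|f pt| * |g pt|)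
            = (pt.2 ^ ((1 - (n : ℝ)) * s₁) * |f pt|) * (pt.2 ^ ((1 - (n : ℝ)) * s₂) * |g pt|)
          from by ring,
        ENNReal.ofReal_mul (mul_nonneg (Real.rpow_nonneg h2.le _) (abs_nonneg _))]
    calc eN q₀ (coneMeasure n x')
          (fun pt => ENNReal.ofReal (pt.2 ^ ((1 - (n : ℝ)) * s₀) * |(f * g) pt|))
        = eN q₀ (coneMeasure n x')
            ((fun pt => ENNReal.ofReal (pt.2 ^ ((1 - (n : ℝ)) * s₁) * |f pt|)) *
              fun pt => ENNReal.ofReal (pt.2 ^ ((1 - (n : ℝ)) * s₂) * |g pt|)) :=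
          eN_congr q₀ hae
      _ ≤ _ := eN_holder _ hq₁ hq₂ hq hw₁.aemeasurable hw₂.aemeasurable
  have houter : wTentNorm n p₀ q₀ s₀ (f * g) ≤
      wTentNorm n p₁ q₁ s₁ f * wTentNorm n p₂ q₂ s₂ g := by
    calc wTentNorm n p₀ q₀ s₀ (f * g)
        ≤ eN p₀ volume
            ((fun x' => eN q₁ (coneMeasure n x')
                fun pt => ENNReal.ofReal (pt.2 ^ ((1 - (n : ℝ)) * s₁) * |f pt|)) *
              fun x' => eN q₂ (coneMeasure n x')
                fun pt => ENNReal.ofReal (pt.2 ^ ((1 - (n : ℝ)) * s₂) * |g pt|)) :=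
          eN_mono p₀ (Filter.Eventually.of_forall key)
      _ ≤ _ := eN_holder volume hp₁ hp₂ hp
          (measurable_eN_cone n q₁ hw₁).aemeasurable
          (measurable_eN_cone n q₂ hw₂).aemeasurable
  refine ⟨lt_of_le_of_lt houter (ENNReal.mul_lt_top hFf hFg), ?_⟩
  simpa [ENNReal.ofReal_one] using houter
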